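/- arXiv:2603.21241 — 6 statements merged into one kernel-verified Lean document; each statement's English description precedes it below -/
import Mathlib

section
/- For a nonnegative polynomial p that is a sum of squares, the minimum possible rank of an sos representation of p equals the sos rank of p, i.e., the minimum number N of squares in any representation p = sum_{k=1}^N p_k^2. -/
/-!
Write the summands of an sos representation `p = ∑ₖ qₖ²` in a basis `e₁, …, e_r` of their span,
`qₖ = ∑ⱼ Cₖⱼ eⱼ`. Then `p = ∑ⱼₗ (CᵀC)ⱼₗ eⱼ eₗ` depends on `C` only through its Gram matrix `CᵀC`,
which is positive semidefinite of size `r × r`, hence equal to `BᵀB` for a square `B`. The rows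
of `B` give a representation of `p` with exactly `r` squares, so the minimal number of squares is
at most the minimal rank; the reverse inequality holds because a span of `N` vectors has dimension
at most `N`.
-/

open MvPolynomial Matrix

theorem Nat.sInf_eq_sInf_of_forall_exists_le {s t : Set ℕ} (hst : ∀ a ∈ s, ∃ b ∈ t, b ≤ a)
    (hts : ∀ b ∈ t, ∃ a ∈ s, a ≤ b) : sInf s = sInf t := by
  rcases s.eq_empty_or_nonempty with rfl | hs
  · rw [Set.eq_empty_of_forall_notMem (s := t) fun b hb ↦ by simpa using hts b hb]
  have ht : t.Nonempty := let ⟨a, ha⟩ := hs; let ⟨b, hb, _⟩ := hst a ha; ⟨b, hb⟩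
  apply le_antisymm
  · obtain ⟨a, ha, hab⟩ := hts _ (Nat.sInf_mem ht)
    exact (Nat.sInf_le ha).trans hab
  · obtain ⟨b, hb, hba⟩ := hst _ (Nat.sInf_mem hs)
    exact (Nat.sInf_le hb).trans hba

section SumSq

variable {R A ι κ μ : Type*} [CommRing R] [CommRing A] [Algebra R A]
  [Fintype ι] [Fintype κ] [Fintype μ]

theorem sum_sq_sum_smul (C : Matrix ι κ R) (e : κ → A) :
    ∑ i, (∑ j, C i j • e j) ^ 2 = ∑ j, ∑ l, (Cᵀ * C) j l • (e j * e l) := by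
  simp only [sq, Finset.sum_mul_sum, mul_apply, transpose_apply, Finset.sum_smul,
    smul_mul_smul_comm]
  rw [Finset.sum_comm]
  exact Finset.sum_congr rfl fun _ _ ↦ Finset.sum_comm

theorem sum_sq_sum_smul_eq_of_transpose_mul_self_eq {C : Matrix ι κ R} {D : Matrix μ κ R}
    (h : Cᵀ * C = Dᵀ * D) (e : κ → A) :
    ∑ i, (∑ j, C i j • e j) ^ 2 = ∑ i, (∑ j, D i j • e j) ^ 2 := by
  rw [sum_sq_sum_smul, sum_sq_sum_smul, h]

end SumSq

theorem Matrix.exists_transpose_mul_self_eq_transpose_mul_self {m r : Type*} [Fintype m]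
    [Fintype r] [DecidableEq r] (C : Matrix m r ℝ) : ∃ B : Matrix r r ℝ, Cᵀ * C = Bᵀ * B := by
  open scoped MatrixOrder Matrix.Norms.L2Operator in
  obtain ⟨B, hB⟩ :=
    CStarAlgebra.nonneg_iff_eq_star_mul_self.mp (posSemidef_conjTranspose_mul_self C).nonneg
  exact ⟨B, hB⟩

theorem exists_sum_sq_eq_of_finrank_span {A ι : Type*} [CommRing A] [Algebra ℝ A] [Fintype ι]
    (q : ι → A) :
    ∃ s : Fin (Module.finrank ℝ (Submodule.span ℝ (Set.range q))) → A,
      ∑ i, s i ^ 2 = ∑ k, q k ^ 2 := by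
  set V := Submodule.span ℝ (Set.range q)
  have : FiniteDimensional ℝ V := FiniteDimensional.span_of_finite ℝ (Set.finite_range q)
  let e := Module.finBasis ℝ V
  have hq (k : ι) : q k ∈ V := Submodule.subset_span (Set.mem_range_self k)
  let C : Matrix ι (Fin (Module.finrank ℝ V)) ℝ := fun k j ↦ e.repr ⟨q k, hq k⟩ j
  have hqC (k : ι) : q k = ∑ j, C k j • (e j : A) := by
    have h := congrArg Subtype.val (e.sum_repr ⟨q k, hq k⟩)
    simp only [Submodule.coe_sum, Submodule.coe_smul] at h
    exact h.symm
  obtain ⟨B, hB⟩ := C.exists_transpose_mul_self_eq_transpose_mul_self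
  refine ⟨fun i ↦ ∑ j, B i j • (e j : A), ?_⟩
  simp_rw [hqC]
  exact (sum_sq_sum_smul_eq_of_transpose_mul_self_eq hB _).symm

theorem rmin_eq_sosRank_general (n : ℕ) (p : MvPolynomial (Fin n) ℝ) :
    sInf {r : ℕ | ∃ (N : ℕ) (q : Fin N → MvPolynomial (Fin n) ℝ),
        p = ∑ k, (q k) ^ 2 ∧
        r = Module.finrank ℝ (Submodule.span ℝ (Set.range q))} =
    sInf {N : ℕ | ∃ q : Fin N → MvPolynomial (Fin n) ℝ, p = ∑ k, (q k) ^ 2} := by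
  apply Nat.sInf_eq_sInf_of_forall_exists_le
  · rintro _ ⟨N, q, hp, rfl⟩
    obtain ⟨s, hs⟩ := exists_sum_sq_eq_of_finrank_span q
    exact ⟨_, ⟨s, hp.trans hs.symm⟩, le_rfl⟩
  · rintro N ⟨q, hp⟩
    exact ⟨_, ⟨N, q, hp, rfl⟩, (finrank_range_le_card q).trans_eq (Fintype.card_fin N)⟩

/-- For a nonnegative polynomial `p` that is a sum of squares, the minimum possible rank
of an sos representation of `p` (the dimension of the span of the summands) equals the
sos rank of `p`, i.e. the minimum number `N` of squares in any representation
`p = ∑_{k=1}^N pₖ²`. -/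
theorem rmin_eq_sosRank (n : ℕ) (p : MvPolynomial (Fin n) ℝ)
    (hpos : ∀ x : Fin n → ℝ, 0 ≤ eval x p)
    (hsos : ∃ (N : ℕ) (q : Fin N → MvPolynomial (Fin n) ℝ), p = ∑ k, (q k) ^ 2) :
    sInf {r : ℕ | ∃ (N : ℕ) (q : Fin N → MvPolynomial (Fin n) ℝ),
        p = ∑ k, (q k) ^ 2 ∧
        r = Module.finrank ℝ (Submodule.span ℝ (Set.range q))} =
    sInf {N : ℕ | ∃ q : Fin N → MvPolynomial (Fin n) ℝ, p = ∑ k, (q k) ^ 2} :=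
  rmin_eq_sosRank_general n p
end

section
/- Let B be an l^2 x l^2 real symmetric matrix partitioned into l x l blocks (B_{ik}) with B_{ii} = I_l for all i, and suppose that for some fixed indices i, j the block B_{ij} is an orthogonal matrix. If B is positive semidefinite, then B_{ik} = B_{ij} B_{jk} for all 1 <= k <= l. -/
/-! With `U = B i j` and `U * Uᴴ = 1`, the block vector `x` carrying `u` in block `i` and
`-Uᴴ u` in block `j` has `(B x)_i = u - U Uᴴ u = 0` and `(B x)_j = Uᴴ u - Uᴴ u = 0`, so
`x⋆ B x = 0`. Positive semidefiniteness upgrades this to `B x = 0`, whose `k`-th block reads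
`B k i u = B k j Uᴴ u`. Taking adjoints gives `B i k = U B j k`. -/

open Matrix Function

namespace Matrix

variable {ι ι' n n' 𝕜 : Type*}

theorem comp_mulVec_uncurry_single [Fintype ι'] [DecidableEq ι'] [Fintype n']
    [NonUnitalNonAssocSemiring 𝕜] (B : Matrix ι ι' (Matrix n n' 𝕜)) (i : ι') (u : n' → 𝕜) :
    comp ι ι' n n' 𝕜 B *ᵥ uncurry (Pi.single i u) = uncurry fun p => B p i *ᵥ u := by
  ext ⟨p, a⟩
  simp [mulVec, dotProduct, Fintype.sum_prod_type, Pi.single_apply, ite_apply, mul_ite,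
    Finset.sum_ite_eq']

theorem uncurry_single_dotProduct [Fintype ι] [DecidableEq ι] [Fintype n]
    [NonUnitalNonAssocSemiring 𝕜] (i : ι) (u : n → 𝕜) (y : ι × n → 𝕜) :
    uncurry (Pi.single i u) ⬝ᵥ y = u ⬝ᵥ fun a => y (i, a) := by
  simp [dotProduct, Fintype.sum_prod_type, Pi.single_apply, ite_apply, ite_mul,
    Finset.sum_ite_eq']

theorem block_conjTranspose_of_isHermitian_comp [Star 𝕜] {B : Matrix ι ι (Matrix n n 𝕜)}
    (hB : (comp ι ι n n 𝕜 B).IsHermitian) (p q : ι) : (B p q)ᴴ = B q p := by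
  ext a b
  exact congr_fun₂ hB (q, a) (p, b)

end Matrix

open scoped ComplexOrder

namespace Matrix.PosSemidef

variable {ι n 𝕜 : Type*} [Fintype ι] [DecidableEq ι] [Fintype n] [DecidableEq n] [RCLike 𝕜]
  {B : Matrix ι ι (Matrix n n 𝕜)}

theorem block_eq_mul_conjTranspose (hB : (comp ι ι n n 𝕜 B).PosSemidef) {i j : ι}
    (hi : B i i = 1) (hj : B j j = 1) (hU : B i j * (B i j)ᴴ = 1) (k : ι) :
    B k i = B k j * (B i j)ᴴ := by
  have hji : B j i = (B i j)ᴴ := (block_conjTranspose_of_isHermitian_comp hB.isHermitian i j).symm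
  refine ext_iff_mulVec.mpr fun u => ?_
  set w := (B i j)ᴴ *ᵥ u
  set x := uncurry (Pi.single i u) - uncurry (Pi.single j w)
  have hBx : comp ι ι n n 𝕜 B *ᵥ x = uncurry fun p => B p i *ᵥ u - B p j *ᵥ w := by
    rw [mulVec_sub, comp_mulVec_uncurry_single, comp_mulVec_uncurry_single]
    rfl
  have hBx_i : B i i *ᵥ u - B i j *ᵥ w = 0 := by
    rw [hi, mulVec_mulVec, hU, one_mulVec, sub_self]
  have hBx_j : B j i *ᵥ u - B j j *ᵥ w = 0 := by
    rw [hj, hji, one_mulVec, sub_self]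
  have hform : star x ⬝ᵥ comp ι ι n n 𝕜 B *ᵥ x = 0 := by
    have hstar : star x = uncurry (Pi.single i (star u)) - uncurry (Pi.single j (star w)) := by
      simp only [x, star_sub, ← Pi.star_single]; rfl
    rw [hstar, hBx, sub_dotProduct, uncurry_single_dotProduct, uncurry_single_dotProduct]
    simp only [uncurry_apply_pair, hBx_i, hBx_j, dotProduct_zero, sub_self]
  have hk := congr_fun ((hB.dotProduct_mulVec_zero_iff x).mp hform)
  rw [hBx] at hk
  rw [← mulVec_mulVec]
  funext a
  exact sub_eq_zero.mp (hk (k, a))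

theorem block_eq_mul_block (hB : (comp ι ι n n 𝕜 B).PosSemidef) {i j : ι}
    (hi : B i i = 1) (hj : B j j = 1) (hU : B i j * (B i j)ᴴ = 1) (k : ι) :
    B i k = B i j * B j k := by
  have hH := block_conjTranspose_of_isHermitian_comp hB.isHermitian
  calc B i k = (B k i)ᴴ := (hH k i).symm
    _ = (B k j * (B i j)ᴴ)ᴴ := by rw [hB.block_eq_mul_conjTranspose hi hj hU k]
    _ = B i j * B j k := by rw [conjTranspose_mul, conjTranspose_conjTranspose, hH]

end Matrix.PosSemidef

/-- Let `B` be an `l² × l²` real symmetric block matrix with `l × l` blocks `B_{ik}`,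
`B_{ii} = I_l`, and suppose the block `B_{ij}` is orthogonal for some fixed `i, j`.
If `B` is positive semidefinite, then `B_{ik} = B_{ij} B_{jk}` for all `k`. -/
theorem block_product_of_psd_orthogonal_block (l : ℕ)
    (Bblk : Fin l → Fin l → Matrix (Fin l) (Fin l) ℝ)
    (hdiag : ∀ i, Bblk i i = 1)
    (i j : Fin l)
    (horth : (Bblk i j)ᵀ * Bblk i j = 1)
    (hpsd : (Matrix.of fun (p q : Fin l × Fin l) => Bblk p.1 q.1 p.2 q.2).PosSemidef) :
    ∀ k : Fin l, Bblk i k = Bblk i j * Bblk j k := by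
  have hU : Bblk i j * (Bblk i j)ᴴ = 1 := by
    rw [conjTranspose_eq_transpose_of_trivial]
    exact mul_eq_one_comm.mp horth
  exact hpsd.block_eq_mul_block (hdiag i) (hdiag j) hU
end

section
/- Let R = (R_1,...,R_l) be an m x l^2 matrix with blocks R_q of size m x l satisfying R_q R_q^T = I_m for all q, and let B = (B_{ik}) be an l^2 x l^2 symmetric matrix with l x l blocks. Then B - R^T R is positive semidefinite if and only if B is positive semidefinite and R_i B_{ij} = R_j for all 1 <= i, j <= l. -/
/-! If `B - RᵀR ⪰ 0`, test it against `Fᵢᵀ`, where `Fᵢ` is `Rᵢ` placed in the `i`-th block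
column: `R Fᵢᵀ = I` and `Fᵢ B Fᵢᵀ = Rᵢ Bᵢᵢ Rᵢᵀ = I`, so the quadratic form of `B - RᵀR` vanishes
on `Fᵢᵀ`, hence `(B - RᵀR) Fᵢᵀ = 0`, i.e. `B Fᵢᵀ = Rᵀ`; its `j`-th block row is `Bⱼᵢ Rᵢᵀ = Rⱼᵀ`.
Conversely, the block identities give `R B = l R`, and together with `R Rᵀ = l I` the projection
`P = I - RᵀR / l` satisfies `Pᵀ B P = B - RᵀR`. -/

open Matrix
open scoped ComplexOrder

namespace Matrix

section Blocks

variable {α ι m n : Type*}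

def blockRow (Rblk : ι → Matrix m n α) : Matrix m (ι × n) α :=
  of fun a p => Rblk p.1 a p.2

def blockMatrix (Bblk : ι → ι → Matrix n n α) : Matrix (ι × n) (ι × n) α :=
  of fun p q => Bblk p.1 q.1 p.2 q.2

@[simp]
theorem blockRow_submatrix (Rblk : ι → Matrix m n α) (i : ι) :
    (blockRow Rblk).submatrix id (Prod.mk i) = Rblk i :=
  rfl

@[simp]
theorem blockMatrix_submatrix (Bblk : ι → ι → Matrix n n α) (i j : ι) :
    (blockMatrix Bblk).submatrix (Prod.mk i) (Prod.mk j) = Bblk i j :=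
  rfl

variable [Fintype ι] [Fintype n]

theorem blockRow_mul [NonUnitalNonAssocSemiring α] {k : Type*} (Rblk : ι → Matrix m n α)
    (N : Matrix (ι × n) k α) : blockRow Rblk * N = ∑ i, Rblk i * N.submatrix (Prod.mk i) id := by
  ext a c
  simp only [blockRow, mul_apply, of_apply, Fintype.sum_prod_type, sum_apply, submatrix_apply,
    id_eq]

theorem blockRow_mul_conjTranspose_self [NonUnitalNonAssocSemiring α] [StarRing α]
    (Rblk : ι → Matrix m n α) :
    blockRow Rblk * (blockRow Rblk)ᴴ = ∑ i, Rblk i * (Rblk i)ᴴ :=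
  blockRow_mul Rblk _

theorem blockRow_mul_blockMatrix [NonAssocSemiring α] {Rblk : ι → Matrix m n α}
    {Bblk : ι → ι → Matrix n n α} (h : ∀ i j, Rblk i * Bblk i j = Rblk j) :
    blockRow Rblk * blockMatrix Bblk = Fintype.card ι • blockRow Rblk := by
  have hterm : ∀ i, Rblk i * (blockMatrix Bblk).submatrix (Prod.mk i) id = blockRow Rblk := by
    intro i
    ext a ⟨j, t⟩
    simp [blockMatrix, blockRow, ← h i j, mul_apply]
  simp only [blockRow_mul, hterm, Finset.sum_const, Finset.card_univ]

end Blocks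

section Reindex

variable {α k l o : Type*} [Fintype o] [DecidableEq o] [NonAssocSemiring α]

theorem mul_one_submatrix_id (X : Matrix k o α) (f : l → o) :
    X * (1 : Matrix o o α).submatrix id f = X.submatrix id f := by
  simpa using mul_submatrix_one (Equiv.refl o) f X

theorem one_submatrix_id_mul (f : l → o) (X : Matrix o k α) :
    (1 : Matrix o o α).submatrix f id * X = X.submatrix f id := by
  simpa using one_submatrix_mul f (Equiv.refl o) X

end Reindex

variable {𝕜 : Type*} [RCLike 𝕜] {ι m n : Type*} [Fintype n]

open scoped MatrixOrder in
theorem PosSemidef.mul_eq_zero_of_conjTranspose_mul_mul_eq_zero {M : Matrix n n 𝕜}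
    (hM : M.PosSemidef) {E : Matrix n m 𝕜} (h : Eᴴ * M * E = 0) : M * E = 0 := by
  classical
  obtain ⟨C, rfl⟩ := CStarAlgebra.nonneg_iff_eq_star_mul_self.mp hM.nonneg
  have hCE : (C * E)ᴴ * (C * E) = 0 := by
    simpa only [conjTranspose_mul, star_eq_conjTranspose, Matrix.mul_assoc] using h
  rw [Matrix.mul_assoc, conjTranspose_mul_self_eq_zero.mp hCE, Matrix.mul_zero]

variable [Fintype m] [DecidableEq m]

theorem mul_conjTranspose_eq_of_posSemidef_sub {B : Matrix n n 𝕜} {R F : Matrix m n 𝕜}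
    (h : (B - Rᴴ * R).PosSemidef) (hRF : R * Fᴴ = 1) (hFBF : F * B * Fᴴ = 1) :
    B * Fᴴ = Rᴴ := by
  have hFR : F * Rᴴ = 1 := by simpa using congrArg (·ᴴ) hRF
  have hquad : Fᴴᴴ * (B - Rᴴ * R) * Fᴴ = 0 := by
    rw [conjTranspose_conjTranspose, Matrix.mul_sub, Matrix.sub_mul, hFBF, ← Matrix.mul_assoc F,
      hFR, Matrix.one_mul, hRF, sub_self]
  have hker := h.mul_eq_zero_of_conjTranspose_mul_mul_eq_zero hquad
  rwa [Matrix.sub_mul, Matrix.mul_assoc, hRF, Matrix.mul_one, sub_eq_zero] at hker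

theorem PosSemidef.sub_conjTranspose_mul_self {B : Matrix n n 𝕜} (hB : B.PosSemidef)
    {R : Matrix m n 𝕜} {c : ℝ} (hRR : R * Rᴴ = c • 1) (hRB : R * B = c • R) :
    (B - Rᴴ * R).PosSemidef := by
  classical
  rcases eq_or_ne c 0 with rfl | hc
  · rw [zero_smul, self_mul_conjTranspose_eq_zero] at hRR
    simpa [hRR] using hB
  set P : Matrix n n 𝕜 := 1 - c⁻¹ • (Rᴴ * R)
  have hRRB : Rᴴ * R * B = c • (Rᴴ * R) := by
    rw [Matrix.mul_assoc, hRB, Matrix.mul_smul]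
  have hBRR : B * (Rᴴ * R) = c • (Rᴴ * R) := by
    simpa [hB.isHermitian.eq, Matrix.mul_assoc] using congrArg (·ᴴ) hRRB
  have hRR_sq : Rᴴ * R * (Rᴴ * R) = c • (Rᴴ * R) := by
    rw [Matrix.mul_assoc, ← Matrix.mul_assoc R, hRR, Matrix.smul_mul, Matrix.one_mul,
      Matrix.mul_smul]
  have hP : Pᴴ = P := by simp [P]
  have hBP : B * P = B - Rᴴ * R := by
    rw [Matrix.mul_sub, Matrix.mul_one, Matrix.mul_smul, hBRR, smul_smul, inv_mul_cancel₀ hc,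
      one_smul]
  have hPBP : Pᴴ * B * P = B - Rᴴ * R := by
    rw [hP, Matrix.mul_assoc, hBP, Matrix.sub_mul, Matrix.one_mul, Matrix.smul_mul, Matrix.mul_sub,
      hRRB, hRR_sq, sub_self, smul_zero, sub_zero]
  simpa [hPBP] using hB.conjTranspose_mul_mul_same P

variable [Fintype ι] [DecidableEq ι] [DecidableEq n]

theorem mul_blockMatrix_eq_of_posSemidef_sub {Rblk : ι → Matrix m n 𝕜}
    {Bblk : ι → ι → Matrix n n 𝕜} (hR : ∀ i, Rblk i * (Rblk i)ᴴ = 1) (hdiag : ∀ i, Bblk i i = 1)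
    (h : (blockMatrix Bblk - (blockRow Rblk)ᴴ * blockRow Rblk).PosSemidef) (i j : ι) :
    Rblk i * Bblk i j = Rblk j := by
  set R := blockRow Rblk
  set B := blockMatrix Bblk
  have hB : Bᴴ = B := by
    simpa using (h.isHermitian.add (isHermitian_conjTranspose_mul_self R)).eq
  set F : Matrix m (ι × n) 𝕜 := Rblk i * (1 : Matrix (ι × n) (ι × n) 𝕜).submatrix (Prod.mk i) id
  have hFH : Fᴴ = (1 : Matrix (ι × n) (ι × n) 𝕜).submatrix id (Prod.mk i) * (Rblk i)ᴴ := by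
    simp [F]
  have hcol : B * Fᴴ = Rᴴ := by
    refine mul_conjTranspose_eq_of_posSemidef_sub h ?_ ?_
    · rw [hFH, ← Matrix.mul_assoc, mul_one_submatrix_id, blockRow_submatrix, hR]
    · calc F * B * Fᴴ = Rblk i * ((1 : Matrix (ι × n) (ι × n) 𝕜).submatrix (Prod.mk i) id * B *
              (1 : Matrix (ι × n) (ι × n) 𝕜).submatrix id (Prod.mk i)) * (Rblk i)ᴴ := by
            simp only [hFH, F, Matrix.mul_assoc]
        _ = Rblk i * Bblk i i * (Rblk i)ᴴ := by
            simp only [one_submatrix_id_mul, mul_one_submatrix_id, submatrix_submatrix,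
              Function.comp_id, Function.id_comp, B, blockMatrix_submatrix]
        _ = 1 := by rw [hdiag, Matrix.mul_one, hR]
  have hblock : Bblk j i * (Rblk i)ᴴ = (Rblk j)ᴴ := by
    have := congrArg ((1 : Matrix (ι × n) (ι × n) 𝕜).submatrix (Prod.mk j) id * ·) hcol
    simpa only [hFH, ← Matrix.mul_assoc, one_submatrix_id_mul, mul_one_submatrix_id,
      submatrix_submatrix, Function.comp_id, Function.id_comp, B, blockMatrix_submatrix, R,
      ← conjTranspose_submatrix, blockRow_submatrix] using this
  have hsym : (Bblk j i)ᴴ = Bblk i j := by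
    simpa [B, ← conjTranspose_submatrix] using congrArg (·.submatrix (Prod.mk i) (Prod.mk j)) hB
  simpa [hsym] using congrArg (·ᴴ) hblock

end Matrix

theorem sub_RTR_posSemidef_iff_general (m l : ℕ)
    (Rblk : Fin l → Matrix (Fin m) (Fin l) ℝ)
    (hR : ∀ q, Rblk q * (Rblk q)ᵀ = 1)
    (Bblk : Fin l → Fin l → Matrix (Fin l) (Fin l) ℝ)
    (B : Matrix (Fin l × Fin l) (Fin l × Fin l) ℝ)
    (hB : B = Matrix.of fun p q => Bblk p.1 q.1 p.2 q.2)
    (hdiag : ∀ i, Bblk i i = 1)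
    (R : Matrix (Fin m) (Fin l × Fin l) ℝ)
    (hRdef : R = Matrix.of fun α p => Rblk p.1 α p.2) :
    (B - Rᵀ * R).PosSemidef ↔
      (B.PosSemidef ∧ ∀ i j : Fin l, Rblk i * Bblk i j = Rblk j) := by
  obtain rfl : B = blockMatrix Bblk := hB
  obtain rfl : R = blockRow Rblk := hRdef
  simp only [← conjTranspose_eq_transpose_of_trivial] at hR ⊢
  constructor
  · intro h
    refine ⟨?_, mul_blockMatrix_eq_of_posSemidef_sub hR hdiag h⟩
    simpa using h.add (posSemidef_conjTranspose_mul_self (blockRow Rblk))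
  · rintro ⟨hB, hblocks⟩
    refine hB.sub_conjTranspose_mul_self (c := l) ?_ ?_
    · rw [blockRow_mul_conjTranspose_self]
      simp only [hR, Finset.sum_const, Finset.card_univ, Fintype.card_fin, Nat.cast_smul_eq_nsmul]
    · rw [blockRow_mul_blockMatrix hblocks, Fintype.card_fin, Nat.cast_smul_eq_nsmul]

/-- Let `R = (R₁,…,R_l)` be an `m × l²` matrix with blocks `R_q` of size `m × l`
satisfying `R_q R_qᵀ = I_m`, and let `B = (B_{ik})` be an `l² × l²` symmetric matrix with
`l × l` blocks (with identity diagonal blocks). Then `B - Rᵀ R` is positive semidefinite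
iff `B` is positive semidefinite and `R_i B_{ij} = R_j` for all `i, j`. -/
theorem sub_RTR_posSemidef_iff (m l : ℕ)
    (Rblk : Fin l → Matrix (Fin m) (Fin l) ℝ)
    (hR : ∀ q, Rblk q * (Rblk q)ᵀ = 1)
    (Bblk : Fin l → Fin l → Matrix (Fin l) (Fin l) ℝ)
    (B : Matrix (Fin l × Fin l) (Fin l × Fin l) ℝ)
    (hB : B = Matrix.of fun p q => Bblk p.1 q.1 p.2 q.2)
    (hBsym : Bᵀ = B)
    (hdiag : ∀ i, Bblk i i = 1)
    (R : Matrix (Fin m) (Fin l × Fin l) ℝ)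
    (hRdef : R = Matrix.of fun α p => Rblk p.1 α p.2) :
    (B - Rᵀ * R).PosSemidef ↔
      (B.PosSemidef ∧ ∀ i j : Fin l, Rblk i * Bblk i j = Rblk j) :=
  sub_RTR_posSemidef_iff_general m l Rblk hR Bblk B hB hdiag R hRdef
end

section
/- Let B be an l^2 x l^2 positive semidefinite matrix with blocks (B_{ik})_{i,k=1}^l satisfying B_{ii} = I_l, B_{ik} skew-symmetric for i != k, and R_i B_{ij} = R_j for all i,j, where the R_q are built from a Clifford representation as in the paper (so that R B = l R and R R^T = l I_m with R = (R_1,...,R_l) of size m x l^2). Then rank(B - R^T R) = rank(B) - m. -/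
open Matrix

lemma rank_add_of_ortho {n : Type*} [Fintype n] [DecidableEq n]
    (C Q : Matrix n n ℝ) (c : ℝ) (hc : c ≠ 0)
    (hQQ : Q * Q = c • Q) (hCQ : C * Q = 0) (hQC : Q * C = 0) :
    (C + Q).rank = C.rank + Q.rank := by
  have hg : ∀ v, C.mulVecLin (Q.mulVecLin v) = 0 := by
    intro v
    have := congrArg Matrix.mulVecLin hCQ
    rw [Matrix.mulVecLin_mul] at this
    simpa using congrFun (congrArg DFunLike.coe this) v
  have hq : ∀ v, Q.mulVecLin (C.mulVecLin v) = 0 := by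
    intro v
    have := congrArg Matrix.mulVecLin hQC
    rw [Matrix.mulVecLin_mul] at this
    simpa using congrFun (congrArg DFunLike.coe this) v
  have hqq : ∀ v, Q.mulVecLin (Q.mulVecLin v) = c • Q.mulVecLin v := by
    intro v
    have := congrArg Matrix.mulVecLin hQQ
    rw [Matrix.mulVecLin_mul] at this
    have := congrFun (congrArg DFunLike.coe this) v
    simpa [Matrix.mulVecLin_apply, Matrix.smul_mulVec] using this
  have hadd : (C + Q).mulVecLin = C.mulVecLin + Q.mulVecLin := by
    ext v i <;> simp [Matrix.mulVecLin, Matrix.add_mulVec]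
  have hsup : LinearMap.range (C + Q).mulVecLin
      = LinearMap.range C.mulVecLin ⊔ LinearMap.range Q.mulVecLin := by
    apply le_antisymm
    · rintro x ⟨v, rfl⟩
      rw [hadd]
      exact Submodule.add_mem_sup ⟨v, rfl⟩ ⟨v, rfl⟩
    · rw [sup_le_iff]
      constructor
      · rintro x ⟨v, rfl⟩
        refine ⟨v - c⁻¹ • Q.mulVecLin v, ?_⟩
        rw [hadd]
        simp only [LinearMap.add_apply, map_sub, LinearMap.map_smul, hg, hq, hqq]
        simp [smul_smul, hc]
      · rintro x ⟨v, rfl⟩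
        refine ⟨c⁻¹ • Q.mulVecLin v, ?_⟩
        rw [hadd]
        simp only [LinearMap.add_apply, LinearMap.map_smul, hg, hqq]
        simp [smul_smul, hc]
  have hinf : LinearMap.range C.mulVecLin ⊓ LinearMap.range Q.mulVecLin = ⊥ := by
    rw [eq_bot_iff]
    rintro x ⟨⟨v, hv⟩, ⟨w, hw⟩⟩
    have h1 : Q.mulVecLin x = 0 := by rw [← hv]; exact hq v
    have h2 : Q.mulVecLin x = c • x := by rw [← hw, hqq, hw]
    have : c • x = 0 := by rw [← h2, h1]
    have : x = 0 := by
      have := smul_eq_zero.mp this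
      tauto
    simp [this]
  have key := Submodule.finrank_sup_add_finrank_inf_eq
    (LinearMap.range C.mulVecLin) (LinearMap.range Q.mulVecLin)
  rw [hinf] at key
  simp only [finrank_bot, add_zero] at key
  show Module.finrank ℝ (LinearMap.range (C + Q).mulVecLin) = _
  rw [hsup]
  exact key


/-- Let `B` be an `l² × l²` positive semidefinite matrix with blocks `B_{ik}` satisfying
`B_{ii} = I_l`, `B_{ik}` skew-symmetric for `i ≠ k`, and `R_i B_{ij} = R_j` for all
`i, j`, where the `R_q` are built from a Clifford representation `E₀ = I_l`,
`E₁,…,E_{m-1}` (so that `R B = l R` and `R Rᵀ = l I_m`). Then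
`rank (B - Rᵀ R) = rank B - m`. -/
theorem rank_sub_RTR_eq_rank_sub_m (l m : ℕ) (E : ℕ → Matrix (Fin l) (Fin l) ℝ)
    (hE0 : E 0 = 1)
    (hskew : ∀ α, 1 ≤ α → α ≤ m - 1 → (E α)ᵀ = -E α)
    (hcliff : ∀ α β, 1 ≤ α → α ≤ m - 1 → 1 ≤ β → β ≤ m - 1 →
      E α * E β + E β * E α =
        if α = β then (-2 : ℝ) • (1 : Matrix (Fin l) (Fin l) ℝ) else 0)
    (Bblk : Fin l → Fin l → Matrix (Fin l) (Fin l) ℝ)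
    (B : Matrix (Fin l × Fin l) (Fin l × Fin l) ℝ)
    (hB : B = Matrix.of fun p q => Bblk p.1 q.1 p.2 q.2)
    (hpsd : B.PosSemidef)
    (hdiag : ∀ i, Bblk i i = 1)
    (hskewB : ∀ i k : Fin l, i ≠ k → (Bblk i k)ᵀ = -Bblk i k)
    (R : Matrix (Fin m) (Fin l × Fin l) ℝ)
    (hRdef : R = Matrix.of fun (α : Fin m) (p : Fin l × Fin l) => E (α : ℕ) p.1 p.2)
    (hRB : ∀ i j : Fin l,
      (Matrix.of fun (α : Fin m) (t : Fin l) => E (α : ℕ) i t) * Bblk i j =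
        Matrix.of fun (α : Fin m) (t : Fin l) => E (α : ℕ) j t) :
    (B - Rᵀ * R).rank = B.rank - m := by
  rcases Nat.eq_zero_or_pos l with hl | hl
  · subst hl
    have h1 : B.rank = 0 := by
      have := B.rank_le_card_width
      simpa using this
    have h2 : (B - Rᵀ * R).rank = 0 := by
      have := (B - Rᵀ * R).rank_le_card_width
      simpa using this
    simp [h1, h2]
  have hl0 : (l : ℝ) ≠ 0 := by positivity
  -- E a * E a = -1 for 1 ≤ a
  have hEsq : ∀ a : ℕ, 1 ≤ a → a ≤ m - 1 → E a * E a = -1 := by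
    intro a h1 h2
    have h := hcliff a a h1 h2 h1 h2
    rw [if_pos rfl] at h
    have : (2:ℝ) • (E a * E a) = (2:ℝ) • (-1 : Matrix (Fin l) (Fin l) ℝ) := by
      rw [two_smul]
      rw [h]
      ext i j
      simp
    exact smul_right_injective _ (by norm_num) this
  have hEanti : ∀ a b : ℕ, 1 ≤ a → a ≤ m - 1 → 1 ≤ b → b ≤ m - 1 → a ≠ b →
      E a * E b = -(E b * E a) := by
    intro a b h1 h2 h3 h4 hab
    have h := hcliff a b h1 h2 h3 h4
    rw [if_neg hab] at h
    rw [eq_neg_iff_add_eq_zero]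
    exact h
  -- trace of E a is 0 for 1 ≤ a
  have hEtr : ∀ a : ℕ, 1 ≤ a → a ≤ m - 1 → (E a).trace = 0 := by
    intro a h1 h2
    have h := congrArg Matrix.trace (hskew a h1 h2)
    rw [Matrix.trace_transpose, Matrix.trace_neg] at h
    linarith
  -- R * Rᵀ = l • 1
  have hmlt : ∀ α : Fin m, (α : ℕ) ≤ m - 1 := fun α => Nat.le_sub_one_of_lt α.isLt
  have hRRt : R * Rᵀ = (l : ℝ) • 1 := by
    ext α β
    rw [Matrix.mul_apply]
    have hsum : ∑ p : Fin l × Fin l, R α p * Rᵀ p β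
        = (E (α:ℕ) * (E (β:ℕ))ᵀ).trace := by
      rw [Fintype.sum_prod_type, Matrix.trace]
      apply Finset.sum_congr rfl
      intro i _
      rw [Matrix.diag_apply, Matrix.mul_apply]
      apply Finset.sum_congr rfl
      intro s _
      simp [hRdef]
    rw [hsum]
    rcases eq_or_ne α β with rfl | hne
    · rcases Nat.eq_zero_or_pos (α : ℕ) with h0 | h1
      · simp [h0, hE0]
      · rw [hskew _ h1 (hmlt α)]
        rw [Matrix.mul_neg, hEsq _ h1 (hmlt α)]
        simp
    · have hvne : (α : ℕ) ≠ (β : ℕ) := fun h => hne (Fin.ext h)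
      rcases Nat.eq_zero_or_pos (α : ℕ) with ha0 | ha1
      · have hb1 : 1 ≤ (β : ℕ) := by omega
        rw [ha0, hE0, one_mul, Matrix.trace_transpose, hEtr _ hb1 (hmlt β)]
        simp [hne]
      · rcases Nat.eq_zero_or_pos (β : ℕ) with hb0 | hb1
        · rw [hb0, hE0, Matrix.transpose_one, mul_one, hEtr _ ha1 (hmlt α)]
          simp [hne]
        · rw [hskew _ hb1 (hmlt β), Matrix.mul_neg, Matrix.trace_neg]
          have hanti := hEanti _ _ ha1 (hmlt α) hb1 (hmlt β) hvne
          have : (E (α:ℕ) * E (β:ℕ)).trace = 0 := by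
            have h1 : (E (α:ℕ) * E (β:ℕ)).trace = (E (β:ℕ) * E (α:ℕ)).trace :=
              Matrix.trace_mul_comm _ _
            have h2 := congrArg Matrix.trace hanti
            rw [Matrix.trace_neg] at h2
            linarith
          rw [this]
          simp [hne]
  -- R * B = l • R
  have hRBmat : R * B = (l : ℝ) • R := by
    ext α p
    obtain ⟨j, t⟩ := p
    rw [Matrix.mul_apply]
    have hrow : ∀ i : Fin l, ∑ s, E (α:ℕ) i s * Bblk i j s t = E (α:ℕ) j t := by
      intro i
      have := congrFun (congrFun (hRB i j) α) t
      rw [Matrix.mul_apply] at this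
      simpa using this
    calc ∑ q : Fin l × Fin l, R α q * B q (j, t)
        = ∑ i, ∑ s, E (α:ℕ) i s * Bblk i j s t := by
          rw [Fintype.sum_prod_type]
          apply Finset.sum_congr rfl; intro i _
          apply Finset.sum_congr rfl; intro s _
          simp [hRdef, hB]
      _ = ∑ _i : Fin l, E (α:ℕ) j t := by
          exact Finset.sum_congr rfl fun i _ => hrow i
      _ = (l:ℝ) * E (α:ℕ) j t := by simp [mul_comm]
      _ = ((l:ℝ) • R) α (j, t) := by simp [hRdef]
  -- B is symmetric
  have hBsymm : Bᵀ = B := by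
    have h : Bᴴ = B := hpsd.1
    ext p q
    have h2 := congrFun (congrFun h q) p
    rw [Matrix.conjTranspose_apply, star_trivial] at h2
    rw [Matrix.transpose_apply, h2]
  have hBRt : B * Rᵀ = (l : ℝ) • Rᵀ := by
    have := congrArg Matrix.transpose hRBmat
    rw [Matrix.transpose_mul, hBsymm, Matrix.transpose_smul] at this
    exact this
  set Q := Rᵀ * R with hQdef
  have hQQ : Q * Q = (l:ℝ) • Q := by
    calc Q * Q = Rᵀ * (R * Rᵀ) * R := by rw [hQdef]; simp [Matrix.mul_assoc]
      _ = (l:ℝ) • Q := by rw [hRRt]; rw [hQdef]; simp [Matrix.smul_mul, Matrix.mul_smul]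
  have hBQ : B * Q = (l:ℝ) • Q := by
    calc B * Q = (B * Rᵀ) * R := by rw [hQdef, Matrix.mul_assoc]
      _ = (l:ℝ) • Q := by rw [hBRt, hQdef, Matrix.smul_mul]
  have hQB : Q * B = (l:ℝ) • Q := by
    calc Q * B = Rᵀ * (R * B) := by rw [hQdef, Matrix.mul_assoc]
      _ = (l:ℝ) • Q := by rw [hRBmat, hQdef, Matrix.mul_smul]
  have hCQ : (B - Q) * Q = 0 := by
    rw [Matrix.sub_mul, hBQ, hQQ, sub_self]
  have hQC : Q * (B - Q) = 0 := by
    rw [Matrix.mul_sub, hQB, hQQ, sub_self]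
  have hQrank : Q.rank = m := by
    rw [hQdef, Matrix.rank_transpose_mul_self]
    apply le_antisymm
    · simpa using R.rank_le_card_height
    · have h1 : (R * Rᵀ).rank ≤ R.rank := Matrix.rank_mul_le_left R Rᵀ
      have h2 : (R * Rᵀ).rank = m := by
        rw [hRRt]
        rw [Matrix.rank_of_isUnit]
        · simp
        · rw [Matrix.isUnit_iff_isUnit_det]
          rw [Matrix.det_smul, Matrix.det_one, mul_one]
          exact IsUnit.pow _ (isUnit_iff_ne_zero.2 hl0)
      omega
  have hkey := rank_add_of_ortho (B - Q) Q (l:ℝ) hl0 hQQ hCQ hQC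
  rw [sub_add_cancel] at hkey
  rw [hkey, hQrank]
  omega
end

section
/- Let B = (B_{ij})_{i,j=1}^l be an l^2 x l^2 positive semidefinite matrix with l x l blocks satisfying B_{ii} = I_l for all i, B_{ij} skew-symmetric and B_{ji} = -B_{ij} for i != j. If rank(B) = l, then the blocks satisfy B_{1i} B_{1j} + B_{1j} B_{1i} = -2 delta_{ij} I_l for all 2 <= i, j <= l; in particular {B_{12},...,B_{1l}} define a representation of the Clifford algebra C_{l-1} on R^l. -/
open Matrix

/-!
The `l` columns of `B` through the first block column restrict, on the first block row, to the
columns of `B₁₁ = 1`; so they are independent and, as `rank B = l`, span the column space of `B`.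
Reading off the coefficients on the first block row gives `B = B_{·1} B_{1·}`, i.e.
`B_{ij} = B_{i1} B_{1j}`. With `B_{i1} = -B_{1i}` this yields `B_{1i}² = -B_{ii} = -1` and
`B_{1i} B_{1j} = -B_{ij} = B_{ji} = -B_{1j} B_{1i}` for `i ≠ j`.
-/

namespace Matrix

variable {K m n ι : Type*} [Field K] [Fintype m] [Fintype n] [Fintype ι] [DecidableEq ι]

theorem eq_mul_of_submatrix_eq_one_of_rank_eq (M : Matrix m n K) (r : ι → m) (c : ι → n)
    (hsub : M.submatrix r c = 1) (hrank : M.rank = Fintype.card ι) :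
    M = M.submatrix id c * M.submatrix r id := by
  have hindep : LinearIndependent K (M.col ∘ c) := by
    refine LinearIndependent.of_comp (LinearMap.funLeft K K r) ?_
    convert Pi.linearIndependent_single_one ι K using 1
    ext a b
    simpa [Pi.single_apply, one_apply, eq_comm] using congr_fun₂ hsub b a
  have hspan : Submodule.span K (Set.range (M.col ∘ c)) = Submodule.span K (Set.range M.col) := by
    refine Submodule.eq_of_le_of_finrank_eq
      (Submodule.span_mono (Set.range_comp_subset_range c _)) ?_
    rw [finrank_span_eq_card hindep, ← rank_eq_finrank_span_cols, hrank]
  ext p q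
  obtain ⟨x, hx⟩ := (Submodule.mem_span_range_iff_exists_fun K).mp
    (hspan ▸ Submodule.subset_span (Set.mem_range_self q) : M.col q ∈ _)
  have hcol : ∀ p, M p q = ∑ a, x a * M p (c a) := fun p => by
    simpa [Finset.sum_apply, col_apply] using (congr_fun hx p).symm
  have hx_eq : ∀ b, x b = M (r b) q := fun b => by
    have hone : ∀ a, M (r b) (c a) = (1 : Matrix ι ι K) b a := fun a => congr_fun₂ hsub b a
    simp [hcol (r b), hone, one_apply]
  simp only [hcol p, mul_apply, submatrix_apply, id, hx_eq, mul_comm]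

theorem blocks_eq_mul_of_rank_eq {κ : Type*} [Fintype κ] (Bblk : κ → κ → Matrix ι ι K) (k : κ)
    (hkk : Bblk k k = 1)
    (hrank : (of fun p q : κ × ι => Bblk p.1 q.1 p.2 q.2).rank = Fintype.card ι) (i j : κ) :
    Bblk i j = Bblk i k * Bblk k j := by
  have h := eq_mul_of_submatrix_eq_one_of_rank_eq _ (fun a => (k, a)) (fun a => (k, a))
    (by ext a b; simp [hkk]) hrank
  ext a b
  simpa [mul_apply] using congr_fun₂ h (i, a) (j, b)

end Matrix

theorem mul_add_mul_swap_eq_of_eq_mul {R ι : Type*} [Ring R] [DecidableEq ι]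
    (b : ι → ι → R) (k : ι)
    (hfac : ∀ i j, b i j = b i k * b k j) (hdiag : ∀ i, b i i = 1)
    (hanti : ∀ i j, i ≠ j → b j i = -b i j) {i j : ι} (hi : i ≠ k) (hj : j ≠ k) :
    b k i * b k j + b k j * b k i = if i = j then -2 else 0 := by
  have hsq : ∀ i, i ≠ k → b k i * b k i = -1 := fun i hi => by
    rw [← neg_eq_iff_eq_neg, ← neg_mul, ← hanti k i hi.symm, ← hfac, hdiag]
  split_ifs with hij
  · subst hij
    rw [hsq i hi]
    norm_num
  · have hij' := hfac i j
    have hji' := hfac j i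
    rw [hanti k i hi.symm, neg_mul] at hij'
    rw [hanti k j hj.symm, neg_mul, hanti i j hij] at hji'
    linear_combination (norm := abel) hij' + hji'

theorem clifford_relations_of_rank_eq_l_general (l : ℕ) (hl : 0 < l)
    (Bblk : Fin l → Fin l → Matrix (Fin l) (Fin l) ℝ)
    (B : Matrix (Fin l × Fin l) (Fin l × Fin l) ℝ)
    (hB : B = Matrix.of fun p q => Bblk p.1 q.1 p.2 q.2)
    (hdiag : ∀ i, Bblk i i = 1)
    (hanti : ∀ i j : Fin l, i ≠ j → Bblk j i = -Bblk i j)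
    (hrank : B.rank = l) :
    ∀ i j : Fin l, i ≠ ⟨0, hl⟩ → j ≠ ⟨0, hl⟩ →
      Bblk ⟨0, hl⟩ i * Bblk ⟨0, hl⟩ j + Bblk ⟨0, hl⟩ j * Bblk ⟨0, hl⟩ i =
        if i = j then (-2 : ℝ) • (1 : Matrix (Fin l) (Fin l) ℝ) else 0 := by
  intro i j hi hj
  have hfac := Matrix.blocks_eq_mul_of_rank_eq Bblk ⟨0, hl⟩ (hdiag _)
    (by rw [← hB, hrank, Fintype.card_fin])
  rw [mul_add_mul_swap_eq_of_eq_mul Bblk _ hfac hdiag hanti hi hj]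
  split_ifs <;> simp [two_smul, one_add_one_eq_two]

/-- Let `B = (B_{ij})` be an `l² × l²` positive semidefinite matrix with `l × l` blocks
satisfying `B_{ii} = I_l`, `B_{ij}` skew-symmetric and `B_{ji} = -B_{ij}` for `i ≠ j`.
If `rank B = l`, then `B_{1i} B_{1j} + B_{1j} B_{1i} = -2 δ_{ij} I_l` for all
`i, j ≥ 2`; in particular `{B_{12},…,B_{1l}}` define a representation of the Clifford
algebra `C_{l-1}` on `ℝ^l`. -/
theorem clifford_relations_of_rank_eq_l (l : ℕ) (hl : 0 < l)
    (Bblk : Fin l → Fin l → Matrix (Fin l) (Fin l) ℝ)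
    (B : Matrix (Fin l × Fin l) (Fin l × Fin l) ℝ)
    (hB : B = Matrix.of fun p q => Bblk p.1 q.1 p.2 q.2)
    (hpsd : B.PosSemidef)
    (hdiag : ∀ i, Bblk i i = 1)
    (hskew : ∀ i j : Fin l, i ≠ j → (Bblk i j)ᵀ = -Bblk i j)
    (hanti : ∀ i j : Fin l, i ≠ j → Bblk j i = -Bblk i j)
    (hrank : B.rank = l) :
    ∀ i j : Fin l, i ≠ ⟨0, hl⟩ → j ≠ ⟨0, hl⟩ →
      Bblk ⟨0, hl⟩ i * Bblk ⟨0, hl⟩ j + Bblk ⟨0, hl⟩ j * Bblk ⟨0, hl⟩ i =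
        if i = j then (-2 : ℝ) • (1 : Matrix (Fin l) (Fin l) ℝ) else 0 :=
  clifford_relations_of_rank_eq_l_general l hl Bblk B hB hdiag hanti hrank
end

section
/- Define B(1,l) as the l^2 x l^2 block matrix with l x l blocks B_{ii} = I_l and B_{ij} = E_{ij} - E_{ji} for i != j, where E_{ij} are the standard l x l matrix units. Then B(1,l) is positive semidefinite and rank(B(1,l)) = l(l-1)/2 + 1. -/
/-!
`B(1,l) = Rᵀ R`, where the rows of `R` are the vectorised identity and the vectorised
`E_{ij} - E_{ji}` for `i < j`; this is the decomposition of `B(1,l)` into rank-one positive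
semidefinite summands. The rows are pairwise orthogonal and nonzero (`R Rᵀ` is diagonal with
entries `l` and `2`), so `rank B(1,l) = rank R` is their number, `1 + l(l-1)/2`.
-/

open Matrix

/-- The block matrix `B(1,l)` with diagonal blocks `I_l` and off-diagonal blocks
`E_{ij} - E_{ji}` (matrix units). -/
noncomputable def Bmat1 (l : ℕ) : Matrix (Fin l × Fin l) (Fin l × Fin l) ℝ :=
  Matrix.of fun p q =>
    (if p.1 = q.1 then (1 : Matrix (Fin l) (Fin l) ℝ)
     else Matrix.single p.1 q.1 (1 : ℝ) - Matrix.single q.1 p.1 (1 : ℝ))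
      p.2 q.2

theorem Fintype.sum_subtype_ite_eq {β M : Type*} [AddCommMonoid M] [DecidableEq β]
    {P : β → Prop} [DecidablePred P] [Fintype {b // P b}] (b : β) (f : {b // P b} → M) :
    ∑ x : {b // P b}, (if b = x then f x else 0) = if h : P b then f ⟨b, h⟩ else 0 := by
  split_ifs with hb
  · rw [Fintype.sum_eq_single ⟨b, hb⟩ fun x hx => if_neg fun h => hx (Subtype.ext h.symm)]
    simp
  · exact Finset.sum_eq_zero fun x _ => if_neg fun (h : b = x) => hb (h ▸ x.2)

theorem Fintype.card_subtype_fst_lt_snd (α : Type*) [Fintype α] [LinearOrder α] :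
    Fintype.card {p : α × α // p.1 < p.2} = (Fintype.card α).choose 2 := by
  rw [Fintype.card_subtype, Fintype.card_product_filter_lt]

namespace Matrix

variable {m n R : Type*}

theorem mul_transpose_self_apply [Fintype n] [Mul R] [AddCommMonoid R]
    (A : Matrix m n R) (i j : m) : (A * Aᵀ) i j = A i ⬝ᵥ A j := rfl

theorem posSemidef_transpose_mul_self [Fintype m] [Fintype n] [CommRing R] [PartialOrder R]
    [StarRing R] [TrivialStar R] [StarOrderedRing R] (A : Matrix m n R) :
    (Aᵀ * A).PosSemidef := by
  simpa only [conjTranspose_eq_transpose_of_trivial] using posSemidef_conjTranspose_mul_self A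

theorem rank_transpose_mul_self_of_mul_transpose_eq_diagonal [Fintype m] [Fintype n]
    [DecidableEq m] [Field R] [LinearOrder R] [IsStrictOrderedRing R]
    {A : Matrix m n R} {w : m → R} (hA : A * Aᵀ = diagonal w) (hw : ∀ i, w i ≠ 0) :
    (Aᵀ * A).rank = Fintype.card m := by
  classical
  rw [rank_transpose_mul_self, ← rank_self_mul_transpose, hA, rank_diagonal]
  exact Fintype.card_congr (Equiv.subtypeUnivEquiv hw)

end Matrix

section Factor

variable (α : Type*) [Fintype α] [LinearOrder α]

noncomputable def Bmat1Factor : Matrix (Option {p : α × α // p.1 < p.2}) (α × α) ℝ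
  | none => fun p => if p.1 = p.2 then 1 else 0
  | some s => Pi.single s.1 1 - Pi.single s.1.swap 1

theorem Bmat1Factor_mul_transpose :
    Bmat1Factor α * (Bmat1Factor α)ᵀ = diagonal fun o => o.elim (Fintype.card α : ℝ) 2 := by
  ext (_ | ⟨s, hs⟩) (_ | ⟨t, ht⟩) <;>
    simp only [mul_transpose_self_apply, Bmat1Factor, dotProduct_sub, sub_dotProduct,
      dotProduct_single, single_dotProduct, diagonal_apply]
  · simp [dotProduct, Fintype.sum_prod_type]
  · simp [ht.ne, ht.ne']
  · simp [hs.ne, hs.ne']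
  · simp [Pi.single_apply, Prod.ext_iff]
    grind

end Factor

theorem Bmat1_eq_transpose_mul_self (l : ℕ) :
    Bmat1 l = (Bmat1Factor (Fin l))ᵀ * Bmat1Factor (Fin l) := by
  ext ⟨i, a⟩ ⟨j, b⟩
  simp only [Bmat1, of_apply]
  split_ifs <;>
    simp [mul_apply, Fintype.sum_option, Bmat1Factor, Pi.single_apply, mul_sub,
      Finset.sum_sub_distrib, Matrix.single, ← Prod.swap_eq_iff_eq_swap,
      Fintype.sum_subtype_ite_eq, one_apply] <;>
    grind

/-- `B(1,l)` is positive semidefinite and has rank `l(l-1)/2 + 1`. -/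
theorem Bmat1_posSemidef_and_rank (l : ℕ) (hl : 1 ≤ l) :
    (Bmat1 l).PosSemidef ∧ (Bmat1 l).rank = l * (l - 1) / 2 + 1 := by
  rw [Bmat1_eq_transpose_mul_self]
  refine ⟨posSemidef_transpose_mul_self _, ?_⟩
  have hw : ∀ o : Option {p : Fin l × Fin l // p.1 < p.2},
      o.elim (Fintype.card (Fin l) : ℝ) 2 ≠ 0 := by
    rintro (_ | _) <;> simp [Nat.one_le_iff_ne_zero.mp hl]
  rw [rank_transpose_mul_self_of_mul_transpose_eq_diagonal (Bmat1Factor_mul_transpose _) hw,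
    Fintype.card_option, Fintype.card_subtype_fst_lt_snd, Fintype.card_fin, Nat.choose_two_right]
end
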